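/- Let C be the category whose objects are the F∞-modules E_0 and E(n) for n ≥ 4, and whose morphisms are injective functions preserving ∔, − and 0 (composition is composition of functions). Let k be any nontrivial ring. Then the subfunctor M of the principal projective P_{E_0} : C ⥤ ModuleCat k defined by M(Z) := the k-span of {e_{g ∘ u} : n ≥ 4, u : E_0 ⟶ E(n) in C, g : E(n) ⟶ Z in C} is not finitely generated. In particular, C is not locally Noetherian. -/

import Mathlib

open CategoryTheory
open scoped Classical

def Sset (n : ℕ) : Set (ℕ × ℕ) :=
  {p | 1 ≤ p.1 ∧ p.1 ≤ n ∧ 1 ≤ p.2 ∧ p.2 ≤ n ∧ p.1 ≤ p.2 + 1 ∧ p.2 ≤ p.1 + 2}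

/-- `S(n)` as a sublattice of `ℕ × ℕ` (componentwise max and min). -/
def SL (n : ℕ) : Sublattice (ℕ × ℕ) where
  carrier := Sset n
  supClosed' := by
    rintro ⟨i, k⟩ h1 ⟨l, m⟩ h2
    simp only [Sset, Set.mem_setOf_eq, Prod.sup_def] at h1 h2 ⊢
    omega
  infClosed' := by
    rintro ⟨i, k⟩ h1 ⟨l, m⟩ h2
    simp only [Sset, Set.mem_setOf_eq, Prod.inf_def] at h1 h2 ⊢
    omega

/-- `D(n) = WithBot S(n)`: `S(n)` with a bottom element `O` adjoined. -/
abbrev Dn (n : ℕ) : Type := WithBot ↥(SL n)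

/-- The element `a_{ik}` of `D(n)` (junk value `⊥` if `(i,k) ∉ S(n)`). -/
noncomputable def aElt (n i k : ℕ) : Dn n :=
  if h : (i, k) ∈ SL n then (↑(⟨(i, k), h⟩ : ↥(SL n)) : Dn n) else ⊥
/-- The 8-element sublattice of `ℕ × ℕ` underlying `D_0`. -/
def SL0 : Sublattice (ℕ × ℕ) where
  carrier := {(1,1),(1,2),(2,1),(2,2),(3,3),(3,4),(4,3),(4,4)}
  supClosed' := by
    intro a ha b hb
    simp only [Set.mem_insert_iff, Set.mem_singleton_iff] at *
    rcases ha with rfl|rfl|rfl|rfl|rfl|rfl|rfl|rfl <;>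
      rcases hb with rfl|rfl|rfl|rfl|rfl|rfl|rfl|rfl <;> decide
  infClosed' := by
    intro a ha b hb
    simp only [Set.mem_insert_iff, Set.mem_singleton_iff] at *
    rcases ha with rfl|rfl|rfl|rfl|rfl|rfl|rfl|rfl <;>
      rcases hb with rfl|rfl|rfl|rfl|rfl|rfl|rfl|rfl <;> decide

/-- The 9-element B-module `D_0` (with bottom element `O` adjoined). -/
abbrev D0 : Type := WithBot ↥SL0

/-- The element `A_{ik}` of `D_0` (junk value `⊥` if `(i,k)` is not in the lattice). -/
noncomputable def A0 (i k : ℕ) : D0 :=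
  if h : (i, k) ∈ SL0 then (↑(⟨(i, k), h⟩ : ↥SL0) : D0) else ⊥
/-- F∞-module structure on `Option (Bool × α)` for a meet-semilattice `α`. -/
abbrev Emod (α : Type) : Type := Option (Bool × α)

/-- Negation: `−none = none`, `−some (ε, p) = some (¬ε, p)`. -/
def Emod.neg {α : Type} : Emod α → Emod α :=
  Option.map (fun p => (!p.1, p.2))

/-- Addition: `x ∔ none = none ∔ x = none`, and
`some (ε, p) ∔ some (ε', q) = some (ε, p ⊓ q)` if `ε = ε'`, `none` otherwise. -/
noncomputable def Emod.add {α : Type} [SemilatticeInf α] : Emod α → Emod α → Emod α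
  | some (ε, p), some (ε', q) => if ε = ε' then some (ε, p ⊓ q) else none
  | _, _ => none

/-- Nonzero vectors of the free F∞-module of rank `m`. -/
abbrev FVec (m : ℕ) : Type := {σ : Fin m → Option Bool // σ ≠ fun _ => none}

/-- The free F∞-module of rank `m`, with zero `none`. -/
abbrev Fm (m : ℕ) : Type := Option (FVec m)

/-- Negation on the free F∞-module: Boolean negation on each defined value. -/
def Fm.neg {m : ℕ} : Fm m → Fm m :=
  Option.map (fun σ => ⟨fun i => (σ.val i).map (fun b => !b), by
    intro hcontra
    apply σ.prop
    funext i
    have h := congrFun hcontra i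
    simpa using h⟩)

/-- Addition on the free F∞-module: `none` absorbs; two nonzero vectors add to `none`
if they clash in some coordinate, and otherwise to their pointwise merge. -/
noncomputable def Fm.add {m : ℕ} : Fm m → Fm m → Fm m
  | some σ, some τ =>
      if ∃ (i : Fin m) (b : Bool), σ.val i = some b ∧ τ.val i = some (!b) then none
      else some ⟨fun i => (σ.val i).or (τ.val i), by
        intro hcontra
        apply σ.prop
        funext i
        have h := congrFun hcontra i
        cases hv : σ.val i with
        | none => rfl
        | some b => rw [hv] at h; simp [Option.or] at h⟩
  | _, _ => none

/-- A type with F∞-module operations `0`, `∔`, `−`. -/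
class FStr (α : Type) where
  z : α
  add : α → α → α
  neg : α → α

noncomputable instance {α : Type} [SemilatticeInf α] : FStr (Emod α) :=
  ⟨none, Emod.add, Emod.neg⟩

noncomputable instance {m : ℕ} : FStr (Fm m) :=
  ⟨none, Fm.add, Fm.neg⟩

/-- A map preserving `0`, `∔` and `−`. -/
def IsFHom {α β : Type} [FStr α] [FStr β] (f : α → β) : Prop :=
  f FStr.z = FStr.z ∧ (∀ x y, f (FStr.add x y) = FStr.add (f x) (f y)) ∧
    ∀ x, f (FStr.neg x) = FStr.neg (f x)
/-- A functor `F : C ⥤ ModuleCat k` is finitely generated if finitely many elements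
`α_j ∈ F(Z_j)` exist such that every `F(W)` is the `k`-span of their images. -/
def FunctorFG {C : Type*} [Category C] {k : Type} [Ring k]
    (F : C ⥤ ModuleCat.{0} k) : Prop :=
  ∃ (ℓ : ℕ) (Z : Fin ℓ → C) (α : ∀ j, F.obj (Z j)),
    ∀ W : C, (⊤ : Submodule k (F.obj W)) =
      Submodule.span k {v | ∃ (j : Fin ℓ) (h : Z j ⟶ W), v = F.map h (α j)}

/-- A subfunctor of `F`: a choice of submodules closed under all the maps `F(h)`. -/
def IsSubfunctor {C : Type*} [Category C] {k : Type} [Ring k]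
    (F : C ⥤ ModuleCat.{0} k) (M : ∀ Z : C, Submodule k (F.obj Z)) : Prop :=
  ∀ ⦃Z W : C⦄ (h : Z ⟶ W) (x : F.obj Z), x ∈ M Z → F.map h x ∈ M W

/-- A subfunctor `M` of `F` is finitely generated if finitely many elements
`α_j ∈ M(Z_j)` exist such that every `M(W)` is the `k`-span of their images. -/
def SubfunctorFG {C : Type*} [Category C] {k : Type} [Ring k]
    (F : C ⥤ ModuleCat.{0} k) (M : ∀ Z : C, Submodule k (F.obj Z)) : Prop :=
  ∃ (ℓ : ℕ) (Z : Fin ℓ → C) (α : ∀ j, F.obj (Z j)),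
    (∀ j, α j ∈ M (Z j)) ∧
    ∀ W : C, M W = Submodule.span k {v | ∃ (j : Fin ℓ) (h : Z j ⟶ W), v = F.map h (α j)}

/-- A category is locally Noetherian if for every left-Noetherian ring `k`, every
subfunctor of every finitely generated functor `C ⥤ ModuleCat k` is finitely
generated. -/
def LocallyNoetherian (C : Type*) [Category C] : Prop :=
  ∀ (k : Type) [Ring k] [IsNoetherianRing k] (F : C ⥤ ModuleCat.{0} k),
    FunctorFG F → ∀ M : ∀ Z : C, Submodule k (F.obj Z), IsSubfunctor F M → SubfunctorFG F M
/-- Objects: the F∞-module `E_0` and the F∞-modules `E(n)` for `n ≥ 4`. -/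
inductive EObj : Type
  | e0 : EObj
  | en : (n : ℕ) → 4 ≤ n → EObj

/-- The underlying meet-semilattice of an object. -/
def EObj.base : EObj → Type
  | .e0 => ↥SL0
  | .en n _ => ↥(SL n)

noncomputable instance (X : EObj) : SemilatticeInf X.base := by
  cases X with
  | e0 => exact inferInstanceAs (SemilatticeInf ↥SL0)
  | en n _ => exact inferInstanceAs (SemilatticeInf ↥(SL n))

/-- The underlying F∞-module of an object. -/
abbrev EObj.carrier (X : EObj) : Type := Emod X.base

/-- The category of the F∞-modules `E_0` and `E(n)` (`n ≥ 4`) with injective maps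
preserving `∔`, `−` and `0` as morphisms. -/
noncomputable instance : Category.{0} EObj where
  Hom X Y := {f : X.carrier → Y.carrier // IsFHom f ∧ Function.Injective f}
  id X := ⟨id, ⟨rfl, fun _ _ => rfl, fun _ => rfl⟩, fun _ _ h => h⟩
  comp f g := ⟨g.1 ∘ f.1,
    ⟨by simp [Function.comp, f.2.1.1, g.2.1.1],
     fun x y => by simp [Function.comp, f.2.1.2.1, g.2.1.2.1],
     fun x => by simp [Function.comp, f.2.1.2.2, g.2.1.2.2]⟩,
    fun _ _ h => f.2.2 (g.2.2 h)⟩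
  id_comp f := rfl
  comp_id f := rfl
  assoc f g h := rfl

/-- The generating set of the subfunctor `M` of the principal projective `P_{E_0}`:
the basis vectors `e_{g ∘ u}` for `u : E_0 ⟶ E(n)`, `g : E(n) ⟶ Z`, `n ≥ 4`. -/
def MsetE (k : Type) [Ring k] (Z : EObj) : Set ((EObj.e0 ⟶ Z) →₀ k) :=
  {v | ∃ (n : ℕ) (h4 : 4 ≤ n) (u : EObj.e0 ⟶ EObj.en n h4) (g : EObj.en n h4 ⟶ Z),
    v = Finsupp.single (u ≫ g) (1 : k)}

/-!
For `N ≥ 4` let `c_N : E_0 ⟶ E(N)` be the corner morphism, placing the two squares of `S_0` at the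
opposite corners `{1,2}²` and `{N-1,N}²` of `S(N)`; its basis vector lies in `M(E(N))`.
An injective morphism of these F∞-modules restricts, on each sign, to an injective meet-preserving
map of the underlying semilattices. An injective meet-preserving map `S(m) → S(N)` raises the first
coordinate by at most `3` per diagonal step, so its image cannot reach from `(1,1)` to `(N-1,N)`
unless `N ≤ 3m`; and there is no morphism `E(n) ⟶ E_0` at all, since `S(n)` has more than `8`
elements. Hence `c_N` factors through no object of size less than `N/3`, and the images of finitely
many elements of `M` never produce the basis vector of `c_N` once `N` is large.
-/

lemma mem_SL {m : ℕ} {p : ℕ × ℕ} :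
    p ∈ SL m ↔ 1 ≤ p.1 ∧ p.1 ≤ m ∧ 1 ≤ p.2 ∧ p.2 ≤ m ∧ p.1 ≤ p.2 + 1 ∧ p.2 ≤ p.1 + 2 :=
  Iff.rfl

namespace SL

variable {m N : ℕ}

lemma le_iff {a b : SL m} :
    a ≤ b ↔ (a : ℕ × ℕ).1 ≤ (b : ℕ × ℕ).1 ∧ (a : ℕ × ℕ).2 ≤ (b : ℕ × ℕ).2 :=
  Subtype.coe_le_coe.symm.trans Prod.le_def

lemma eq_iff {a b : SL m} :
    a = b ↔ (a : ℕ × ℕ).1 = (b : ℕ × ℕ).1 ∧ (a : ℕ × ℕ).2 = (b : ℕ × ℕ).2 :=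
  Subtype.ext_iff.trans Prod.ext_iff

/-- `y` agrees with `x` in one coordinate, and the slope constraints of `S(N)` bound the other. -/
lemma le_of_inf_eq {x y z : SL N} (h : y ⊓ z = x) (hy : y ≠ x) (hz : z ≠ x) :
    (y : ℕ × ℕ).1 ≤ (x : ℕ × ℕ).2 + 1 ∧ (y : ℕ × ℕ).2 ≤ (x : ℕ × ℕ).1 + 2 := by
  rw [Ne, eq_iff] at hy hz
  rw [eq_iff] at h
  simp only [Sublattice.coe_inf, Prod.fst_inf, Prod.snd_inf] at h
  have := mem_SL.1 x.2
  have := mem_SL.1 y.2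
  have := mem_SL.1 z.2
  omega

variable {φ : InfHom (SL m) (SL N)} (hφ : Function.Injective φ)
include hφ

lemma map_le_of_inf_eq {a b c : SL m} (h : b ⊓ c = a) (hb : b ≠ a) (hc : c ≠ a) :
    (φ b : ℕ × ℕ).1 ≤ (φ a : ℕ × ℕ).2 + 1 ∧ (φ b : ℕ × ℕ).2 ≤ (φ a : ℕ × ℕ).1 + 2 :=
  le_of_inf_eq (by rw [← map_inf, h]) (hφ.ne hb) (hφ.ne hc)

/-- Uses `(t,t) = (t,t+1) ⊓ (t+1,t)` and `(t,t+1) = (t,t+2) ⊓ (t+1,t+1)`. -/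
lemma fst_map_diag_succ_le {t : ℕ} (htm : t + 2 ≤ m) {a e : SL m} (ha : (a : ℕ × ℕ) = (t, t))
    (he : (e : ℕ × ℕ) = (t + 1, t + 1)) :
    (φ e : ℕ × ℕ).1 ≤ (φ a : ℕ × ℕ).1 + 3 := by
  have ht := (mem_SL.1 a.2).1
  rw [ha] at ht
  let b : SL m := ⟨(t, t + 1), mem_SL.2 (by omega)⟩
  let c : SL m := ⟨(t + 1, t), mem_SL.2 (by omega)⟩
  let d : SL m := ⟨(t, t + 2), mem_SL.2 (by omega)⟩
  have hφb := map_le_of_inf_eq hφ (a := a) (b := b) (c := c) (by simp [eq_iff, ha, b, c])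
    (by simp [eq_iff, ha, b]) (by simp [eq_iff, ha, c])
  have hφe := map_le_of_inf_eq hφ (a := b) (b := e) (c := d) (by simp [eq_iff, he, b, d])
    (by simp [eq_iff, he, b]) (by simp [b, d])
  have := mem_SL.1 (φ a).2
  omega

lemma fst_map_diag_le {one : SL m} (hone : (one : ℕ × ℕ) = (1, 1)) :
    ∀ t, 1 ≤ t → t + 1 ≤ m → ∀ a : SL m, (a : ℕ × ℕ) = (t, t) →
      (φ a : ℕ × ℕ).1 ≤ (φ one : ℕ × ℕ).1 + 3 * (t - 1)
  | 0, h, _, _, _ => absurd h (by omega)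
  | 1, _, _, a, ha => by rw [Subtype.ext (ha.trans hone.symm)]; omega
  | t + 2, _, htm, a, ha => by
    let b : SL m := ⟨(t + 1, t + 1), mem_SL.2 (by omega)⟩
    have := fst_map_diag_le hone (t + 1) (by omega) (by omega) b rfl
    have := fst_map_diag_succ_le hφ (a := b) (by omega) rfl ha
    omega

lemma fst_map_le_of_ne_top (hm : 2 ≤ m) {d q : SL m} (hd : (d : ℕ × ℕ) = (m - 1, m - 1))
    (hq : (q : ℕ × ℕ) ≠ (m, m)) : (φ q : ℕ × ℕ).1 ≤ (φ d : ℕ × ℕ).1 + 3 := by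
  let r₁ : SL m := ⟨(m - 1, m), mem_SL.2 (by omega)⟩
  let r₂ : SL m := ⟨(m, m - 1), mem_SL.2 (by omega)⟩
  have hr : r₁ ⊓ r₂ = d := by simp [eq_iff, hd, r₁, r₂]
  have hr₁ : r₁ ≠ d := by simp [eq_iff, hd, r₁]; omega
  have hr₂ : r₂ ≠ d := by simp [eq_iff, hd, r₂]; omega
  have h₁ := map_le_of_inf_eq hφ hr hr₁ hr₂
  have h₂ := map_le_of_inf_eq hφ (inf_comm r₁ r₂ ▸ hr) hr₂ hr₁
  have hq' : q ≤ r₁ ∨ q ≤ r₂ := by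
    have := mem_SL.1 q.2
    simp only [le_iff, r₁, r₂]
    rw [Ne, Prod.ext_iff] at hq
    omega
  have := mem_SL.1 (φ d).2
  rcases hq' with h | h <;> have := le_iff.1 (OrderHomClass.mono φ h) <;> omega

theorem le_three_mul (hm : 2 ≤ m) (hc : ∃ q, (φ q : ℕ × ℕ) = (1, 1))
    (ha : ∃ q, (φ q : ℕ × ℕ) = (N - 1, N)) (hb : ∃ q, (φ q : ℕ × ℕ) = (N, N - 1)) :
    N ≤ 3 * m := by
  obtain ⟨qc, hqc⟩ := hc
  obtain ⟨qa, hqa⟩ := ha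
  obtain ⟨qb, hqb⟩ := hb
  let one : SL m := ⟨(1, 1), mem_SL.2 (by omega)⟩
  let d : SL m := ⟨(m - 1, m - 1), mem_SL.2 (by omega)⟩
  have hone : (φ one : ℕ × ℕ).1 ≤ 1 := by
    have := mem_SL.1 qc.2
    have := le_iff.1 (OrderHomClass.mono φ (le_iff.2 (by simp only [one]; omega) : one ≤ qc))
    rw [hqc] at this
    exact this.1
  have hd := fst_map_diag_le hφ (one := one) rfl (m - 1) (by omega) (by omega) d rfl
  have hN := mem_SL.1 (φ qa).2
  rw [hqa] at hN
  have hab : qa ≠ qb := fun h => by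
    have := congrArg (fun q => (φ q : ℕ × ℕ).1) h
    simp only [hqa, hqb] at this
    omega
  have : (qa : ℕ × ℕ) ≠ (m, m) ∨ (qb : ℕ × ℕ) ≠ (m, m) := by
    by_contra! h
    exact hab (Subtype.ext (h.1.trans h.2.symm))
  rcases this with h | h
  · have := fst_map_le_of_ne_top hφ hm (d := d) rfl h
    rw [hqa] at this
    omega
  · have := fst_map_le_of_ne_top hφ hm (d := d) rfl h
    rw [hqb] at this
    omega

end SL

lemma mem_SL0 {p : ℕ × ℕ} :
    p ∈ SL0 ↔
      (1 ≤ p.1 ∧ p.1 ≤ 2 ∧ 1 ≤ p.2 ∧ p.2 ≤ 2) ∨ (3 ≤ p.1 ∧ p.1 ≤ 4 ∧ 3 ≤ p.2 ∧ p.2 ≤ 4) := by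
  obtain ⟨i, k⟩ := p
  change (i, k) ∈ ({(1,1),(1,2),(2,1),(2,2),(3,3),(3,4),(4,3),(4,4)} : Set (ℕ × ℕ)) ↔ _
  simp only [Set.mem_insert_iff, Set.mem_singleton_iff, Prod.mk.injEq]
  omega

instance : Finite SL0 :=
  inferInstanceAs (Finite ↥({(1,1),(1,2),(2,1),(2,2),(3,3),(3,4),(4,3),(4,4)} : Set (ℕ × ℕ)))

lemma card_SL0 : Nat.card SL0 = 8 := by
  change Nat.card ↥({(1,1),(1,2),(2,1),(2,2),(3,3),(3,4),(4,3),(4,4)} : Set (ℕ × ℕ)) = 8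
  simp

lemma SL.not_injective_to_SL0 {n : ℕ} (hn : 4 ≤ n) (φ : SL n → SL0) :
    ¬Function.Injective φ := by
  intro hφ
  obtain ⟨pts, hinj, hmem⟩ : ∃ pts : Fin 9 → ℕ × ℕ, Function.Injective pts ∧ ∀ i, pts i ∈ SL n :=
    ⟨![(1, 1), (1, 2), (2, 1), (2, 2), (2, 3), (3, 2), (3, 3), (3, 4), (4, 3)], by decide,
      fun i => by fin_cases i <;> simp [mem_SL] <;> omega⟩
  have hι : Function.Injective fun i => (⟨pts i, hmem i⟩ : SL n) :=
    Function.Injective.of_comp (f := Subtype.val) hinj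
  have := Nat.card_le_card_of_injective _ (hφ.comp hι)
  simp [card_SL0] at this

def corner (N : ℕ) (hN : 4 ≤ N) : InfHom SL0 (SL N) where
  toFun p := ⟨if (p : ℕ × ℕ).1 ≤ 2 then p else ((p : ℕ × ℕ).1 + N - 4, (p : ℕ × ℕ).2 + N - 4), by
    have := mem_SL0.1 p.2
    split_ifs <;> exact mem_SL.2 (by omega)⟩
  map_inf' a b := by
    have := mem_SL0.1 a.2
    have := mem_SL0.1 b.2
    simp only [SL.eq_iff, Sublattice.coe_inf, Prod.fst_inf, Prod.snd_inf]
    split_ifs <;> constructor <;> simp only [Prod.fst_inf, Prod.snd_inf] <;> omega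

lemma corner_apply_coe (N : ℕ) (hN : 4 ≤ N) {p : SL0} :
    (corner N hN p : ℕ × ℕ) =
      if (p : ℕ × ℕ).1 ≤ 2 then (p : ℕ × ℕ) else ((p : ℕ × ℕ).1 + N - 4, (p : ℕ × ℕ).2 + N - 4) := by
  rfl

lemma corner_injective (N : ℕ) (hN : 4 ≤ N) : Function.Injective (corner N hN) := by
  intro a b h
  have := mem_SL0.1 a.2
  have := mem_SL0.1 b.2
  rw [SL.eq_iff, corner_apply_coe, corner_apply_coe] at h
  refine Subtype.ext (Prod.ext ?_ ?_) <;> split_ifs at h <;> omega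

namespace Emod

variable {α β : Type} [SemilatticeInf α] [SemilatticeInf β]

lemma add_some_some (ε ε' : Bool) (p q : α) :
    Emod.add (some (ε, p)) (some (ε', q)) = if ε = ε' then some (ε, p ⊓ q) else none := rfl

def map (φ : InfHom α β) : Emod α → Emod β :=
  Option.map (Prod.map id φ)

lemma isFHom_map (φ : InfHom α β) : IsFHom (map φ) := by
  refine ⟨rfl, ?_, fun x => by cases x <;> rfl⟩
  rintro (_ | ⟨ε, p⟩) (_ | ⟨ε', q⟩)
  iterate 3 rfl
  change map φ (Emod.add _ _) = Emod.add _ _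
  rw [add_some_some]
  split_ifs with h <;> simp [map, add_some_some, h]

lemma map_injective {φ : InfHom α β} (hφ : Function.Injective φ) :
    Function.Injective (map φ) :=
  Option.map_injective (Function.Injective.prodMap Function.injective_id hφ)

/-- The sign cannot change along the sign-`ε` copy of `α`, since `H` would then send the nonzero
`(ε, p) ∔ (ε, q)` to `0`. -/
theorem exists_infHom_of_isFHom {H : Emod α → Emod β} (hH : IsFHom H)
    (hinj : Function.Injective H) (ε : Bool) :
    ∃ (δ : Bool) (φ : InfHom α β), Function.Injective φ ∧ ∀ q, H (some (ε, q)) = some (δ, φ q) := by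
  rcases isEmpty_or_nonempty α with hα | ⟨⟨q₀⟩⟩
  · exact ⟨true, ⟨isEmptyElim, isEmptyElim⟩, fun a => isEmptyElim a, isEmptyElim⟩
  have hne : ∀ q, H (some (ε, q)) ≠ none := fun q h =>
    Option.some_ne_none _ (hinj (h.trans hH.1.symm))
  choose dr hdr using fun q => Option.ne_none_iff_exists'.1 (hne q)
  have hmeet (q q' : α) :
      (dr q).1 = (dr q').1 ∧ dr (q ⊓ q') = ((dr q).1, (dr q).2 ⊓ (dr q').2) := by
    have h := hH.2.1 (some (ε, q)) (some (ε, q'))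
    change H (Emod.add _ _) = Emod.add _ _ at h
    rw [add_some_some, if_pos rfl, hdr, hdr, hdr, ← Prod.mk.eta (p := dr q),
      ← Prod.mk.eta (p := dr q'), add_some_some] at h
    split_ifs at h with hs
    exact ⟨hs, Option.some_injective _ h⟩
  refine ⟨(dr q₀).1, ⟨fun q => (dr q).2, fun q q' => congrArg Prod.snd (hmeet q q').2⟩, ?_, ?_⟩
  · intro a b hab
    have h : H (some (ε, a)) = H (some (ε, b)) := by
      rw [hdr, hdr, Prod.ext (hmeet a b).1 hab]
    simpa using hinj h
  · intro q
    rw [hdr, ← (hmeet q q₀).1]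
    rfl

end Emod

lemma functorFG_coyoneda_comp_free {C : Type*} [Category.{0} C] (k : Type) [Ring k] (X : C) :
    FunctorFG (coyoneda.obj (Opposite.op X) ⋙ ModuleCat.free k) := by
  refine ⟨1, fun _ => X, fun _ => Finsupp.single (𝟙 X) 1, fun W => ?_⟩
  change ⊤ = Submodule.span k {v | ∃ (_ : Fin 1) (h : X ⟶ W),
    v = Finsupp.mapDomain (fun f => f ≫ h) (Finsupp.single (𝟙 X) (1 : k))}
  simp only [Finsupp.mapDomain_single, Category.id_comp, exists_const]
  rw [← (Finsupp.basisSingleOne (R := k) (ι := X ⟶ W)).span_eq, Finsupp.coe_basisSingleOne]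
  congr 1
  ext v
  simp [eq_comm]

namespace EObj

def size : EObj → ℕ
  | e0 => 0
  | en n _ => n

noncomputable def cornerMor (N : ℕ) (hN : 4 ≤ N) : e0 ⟶ en N hN :=
  ⟨Emod.map (corner N hN), Emod.isFHom_map _, Emod.map_injective (corner_injective N hN)⟩

theorem le_three_mul_of_comp_eq_cornerMor {m N : ℕ} {hm : 4 ≤ m} {hN : 4 ≤ N}
    (f : e0 ⟶ en m hm) (g : en m hm ⟶ en N hN) (hfg : f ≫ g = cornerMor N hN) : N ≤ 3 * m := by
  obtain ⟨δ, ψ, -, hψ⟩ := Emod.exists_infHom_of_isFHom (α := SL0) (β := SL m) f.2.1 f.2.2 true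
  obtain ⟨δ', φ, hφ, hφ'⟩ :=
    Emod.exists_infHom_of_isFHom (α := SL m) (β := SL N) g.2.1 g.2.2 δ
  have hcomp (p : SL0) : φ (ψ p) = corner N hN p := by
    have h : some (δ', φ (ψ p)) = some (true, corner N hN p) := (hφ' _).symm.trans
      ((congrArg g.1 (hψ p)).symm.trans (congrFun (congrArg Subtype.val hfg) (some (true, p))))
    exact (Prod.ext_iff.1 (Option.some_injective _ h)).2
  refine SL.le_three_mul hφ (by omega) ⟨ψ ⟨(1, 1), mem_SL0.2 (by omega)⟩, ?_⟩
    ⟨ψ ⟨(3, 4), mem_SL0.2 (by omega)⟩, ?_⟩ ⟨ψ ⟨(4, 3), mem_SL0.2 (by omega)⟩, ?_⟩ <;>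
  · refine (congrArg Subtype.val (hcomp _)).trans ?_
    simp only [corner_apply_coe, Prod.ext_iff]
    split_ifs <;> omega

instance isEmpty_hom_en_e0 {n : ℕ} (hn : 4 ≤ n) : IsEmpty (en n hn ⟶ e0) :=
  ⟨fun g => by
    obtain ⟨_, φ, hφ, -⟩ :=
      Emod.exists_infHom_of_isFHom (α := SL n) (β := SL0) g.2.1 g.2.2 true
    exact SL.not_injective_to_SL0 hn φ hφ⟩

lemma MsetE_e0 (k : Type) [Ring k] : MsetE k e0 = ∅ :=
  Set.eq_empty_of_forall_notMem fun _ ⟨_, _, _, g, _⟩ => isEmptyElim g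

lemma mapDomain_apply_cornerMor_eq_zero (k : Type) [Ring k] {N : ℕ} (hN : 4 ≤ N) {W : EObj}
    (hW : 3 * W.size < N) {a : (e0 ⟶ W) →₀ k} (ha : a ∈ Submodule.span k (MsetE k W))
    (h : W ⟶ en N hN) :
    Finsupp.mapDomain (· ≫ h) a (cornerMor N hN) = 0 := by
  cases W with
  | e0 =>
    rw [MsetE_e0, Submodule.span_empty, Submodule.mem_bot] at ha
    subst ha
    simp only [Finsupp.mapDomain_zero, Finsupp.coe_zero, Pi.zero_apply]
  | en m hm =>
    apply Finsupp.mapDomain_of_notMem_range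
    rintro ⟨f, hf⟩
    have := le_three_mul_of_comp_eq_cornerMor f h hf
    simp only [size] at hW
    omega

lemma isSubfunctor_span_MsetE (k : Type) [Ring k] :
    IsSubfunctor (coyoneda.obj (Opposite.op e0) ⋙ ModuleCat.free k)
      (fun Z => Submodule.span k (MsetE k Z)) := by
  intro Z W h x hx
  refine (Submodule.span_le (p := (Submodule.span k (MsetE k W)).comap _)).2 ?_ hx
  rintro _ ⟨n, hn, u, g, rfl⟩
  exact Submodule.subset_span ⟨n, hn, u, g ≫ h, Finsupp.mapDomain_single⟩

theorem not_exists_span_generators (k : Type) [Ring k] [Nontrivial k] :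
    ¬∃ (ℓ : ℕ) (Z : Fin ℓ → EObj) (α : ∀ j, (e0 ⟶ Z j) →₀ k),
      (∀ j, α j ∈ Submodule.span k (MsetE k (Z j))) ∧
      ∀ W : EObj, Submodule.span k (MsetE k W) =
        Submodule.span k
          {v | ∃ (j : Fin ℓ) (h : Z j ⟶ W), v = Finsupp.mapDomain (· ≫ h) (α j)} := by
  rintro ⟨ℓ, Z, α, hα, hspan⟩
  set N := 3 * ∑ j, (Z j).size + 4
  have hN : 4 ≤ N := by omega
  have hgen : Finsupp.single (cornerMor N hN) (1 : k) ∈ Submodule.span k (MsetE k (en N hN)) :=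
    Submodule.subset_span ⟨N, hN, cornerMor N hN, 𝟙 _, by rw [Category.comp_id]⟩
  have hvanish : Submodule.span k {v | ∃ (j : Fin ℓ) (h : Z j ⟶ en N hN),
      v = Finsupp.mapDomain (· ≫ h) (α j)} ≤ LinearMap.ker (Finsupp.lapply (cornerMor N hN)) := by
    rw [Submodule.span_le]
    rintro _ ⟨j, h, rfl⟩
    refine mapDomain_apply_cornerMor_eq_zero k hN ?_ (hα j) h
    have := Finset.single_le_sum (fun j _ => Nat.zero_le ((Z j).size)) (Finset.mem_univ j)
    omega
  rw [hspan] at hgen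
  simpa using hvanish hgen

theorem not_locallyNoetherian : ¬LocallyNoetherian EObj := fun h =>
  not_exists_span_generators ℤ <|
    h ℤ _ (functorFG_coyoneda_comp_free ℤ e0) _ (isSubfunctor_span_MsetE ℤ)

end EObj

/-- The subfunctor `M` of the principal projective `P_{E_0} : C ⥤ ModuleCat k`
spanned by the `e_{g ∘ u}` (for `u : E_0 ⟶ E(n)`, `g : E(n) ⟶ Z`, `n ≥ 4`) is not
finitely generated; in particular `C` is not locally Noetherian. -/
theorem stmt12 (k : Type) [Ring k] [Nontrivial k] :
    (¬∃ (ℓ : ℕ) (Z : Fin ℓ → EObj) (α : ∀ j, (EObj.e0 ⟶ Z j) →₀ k),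
      (∀ j, α j ∈ Submodule.span k (MsetE k (Z j))) ∧
      ∀ W : EObj, Submodule.span k (MsetE k W) =
        Submodule.span k
          {v | ∃ (j : Fin ℓ) (h : Z j ⟶ W), v = Finsupp.mapDomain (· ≫ h) (α j)}) ∧
    ¬LocallyNoetherian EObj :=
  ⟨EObj.not_exists_span_generators k, EObj.not_locallyNoetherian⟩
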